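/- arXiv:1104.2791 — 3 statements merged into one kernel-verified Lean document; each statement's English description precedes it below -/
import Mathlib

section
/- Let R > 0 and let μ be the uniform probability measure on the interval [−R, R]. Let f(x) = sgn(x) (sign of x, with any value at 0). Then for every smooth function g : ℝ → ℝ, (1/(2R)) ∫_{−R}^{R} f(x) g(x) dx ≤ (R/√3) · √( (1/(2R)) ∫_{−R}^{R} |g′(x)|² dx ). Consequently ‖sgn‖_{H⁻¹(μ)} ≤ R/√3 = √(∫ x² dμ(x)). -/
open MeasureTheory Real Set intervalIntegral

/-- The `H⁻¹(μ)` norm of `f` on ℝ: sup of `∫ f g dμ` over smooth `g` with `∫ |g'|² dμ ≤ 1`. -/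
noncomputable def HinvNorm1 (μ : Measure ℝ) (f : ℝ → ℝ) : ℝ :=
  sSup {r : ℝ | ∃ g : ℝ → ℝ, ContDiff ℝ (⊤ : ℕ∞) g ∧
    (∫ x, (deriv g x) ^ 2 ∂μ) ≤ 1 ∧ r = ∫ x, f x * g x ∂μ}

private lemma memLp2_of_continuous {f : ℝ → ℝ} (hf : Continuous f) (a b : ℝ) :
    MemLp f (ENNReal.ofReal 2) (volume.restrict (Set.Icc a b)) := by
  obtain ⟨C, hC⟩ := (isCompact_Icc (a := a) (b := b)).exists_bound_of_continuousOn
    hf.continuousOn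
  exact MemLp.of_bound hf.aestronglyMeasurable.restrict C
    ((ae_restrict_iff' measurableSet_Icc).2 (ae_of_all _ hC))

private lemma wsq_integral (R : ℝ) (hR : 0 < R) :
    ∫ x in (-R)..R, (R - |x|) ^ 2 = 2 * R ^ 3 / 3 := by
  have hc : Continuous fun x : ℝ => (R - |x|) ^ 2 := by fun_prop
  rw [← intervalIntegral.integral_add_adjacent_intervals
    (hc.intervalIntegrable (-R) 0) (hc.intervalIntegrable 0 R)]
  have h1 : ∫ x in (-R)..(0:ℝ), (R - |x|) ^ 2 = ∫ x in (-R)..(0:ℝ), (R + x) ^ 2 := by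
    refine intervalIntegral.integral_congr (fun x hx => ?_)
    rw [Set.uIcc_of_le (by linarith)] at hx
    rw [abs_of_nonpos hx.2]; ring
  have h2 : ∫ x in (0:ℝ)..R, (R - |x|) ^ 2 = ∫ x in (0:ℝ)..R, (R - x) ^ 2 := by
    refine intervalIntegral.integral_congr (fun x hx => ?_)
    rw [Set.uIcc_of_le hR.le] at hx
    rw [abs_of_nonneg hx.1]
  have e1 : ∫ x in (-R)..(0:ℝ), (R + x) ^ 2 = R ^ 3 / 3 := by
    have h := intervalIntegral.integral_comp_add_left (a := -R) (b := (0:ℝ))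
      (f := fun x : ℝ => x ^ 2) R
    simp only [add_neg_cancel, add_zero] at h
    rw [h, integral_pow]; norm_num
  have e2 : ∫ x in (0:ℝ)..R, (R - x) ^ 2 = R ^ 3 / 3 := by
    have h := intervalIntegral.integral_comp_sub_left (a := (0:ℝ)) (b := R)
      (f := fun x : ℝ => x ^ 2) R
    simp only [sub_zero, sub_self] at h
    rw [h, integral_pow]; norm_num
  rw [h1, h2, e1, e2]; ring


lemma ibp_core (R : ℝ) (hR : 0 < R) (g : ℝ → ℝ) (hg : ContDiff ℝ (⊤ : ℕ∞) g) :
    ∫ x in (-R)..R, Real.sign x * g x = ∫ x in (-R)..R, (R - |x|) * deriv g x := by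
  have hRle : -R ≤ R := by linarith
  have hgc : Continuous g := hg.continuous
  have hg'c : Continuous (deriv g) := hg.continuous_deriv (by simp)
  have hgd : ∀ x : ℝ, HasDerivAt g (deriv g x) x :=
    fun x => (hg.differentiable (by simp) x).hasDerivAt
  -- sign integral on [0,R]
  have hpos : ∫ x in (0:ℝ)..R, Real.sign x * g x = ∫ x in (0:ℝ)..R, g x := by
    rw [intervalIntegral.integral_of_le hR.le, intervalIntegral.integral_of_le hR.le]
    refine setIntegral_congr_fun measurableSet_Ioc (fun x hx => ?_)
    rw [Real.sign_of_pos hx.1, one_mul]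
  -- sign integral on [-R,0]
  have hneg : ∫ x in (-R)..(0:ℝ), Real.sign x * g x = -∫ x in (-R)..(0:ℝ), g x := by
    rw [intervalIntegral.integral_of_le (by linarith), intervalIntegral.integral_of_le (by linarith),
      integral_Ioc_eq_integral_Ioo, integral_Ioc_eq_integral_Ioo, ← MeasureTheory.integral_neg]
    refine setIntegral_congr_fun measurableSet_Ioo (fun x hx => ?_)
    rw [Real.sign_of_neg hx.2, neg_one_mul]
  -- integrability of sign * g
  have hsg1 : IntervalIntegrable (fun x => Real.sign x * g x) volume (-R) 0 := by
    rw [intervalIntegrable_iff_integrableOn_Ioo_of_le (by linarith)]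
    refine (IntegrableOn.congr_fun ?_ (fun x hx => by rw [Real.sign_of_neg hx.2, neg_one_mul])
      measurableSet_Ioo)
    exact (hgc.neg.integrableOn_Icc (a := -R) (b := 0)).mono_set Ioo_subset_Icc_self
  have hsg2 : IntervalIntegrable (fun x => Real.sign x * g x) volume 0 R := by
    rw [intervalIntegrable_iff_integrableOn_Ioo_of_le hR.le]
    refine (IntegrableOn.congr_fun ?_ (fun x hx => by rw [Real.sign_of_pos hx.1, one_mul])
      measurableSet_Ioo)
    exact (hgc.integrableOn_Icc (a := 0) (b := R)).mono_set Ioo_subset_Icc_self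
  -- IBP on [0,R]
  have hibp2 : ∫ x in (0:ℝ)..R, (R - x) * deriv g x = -(R * g 0) + ∫ x in (0:ℝ)..R, g x := by
    have := intervalIntegral.integral_mul_deriv_eq_deriv_mul_of_hasDerivAt
      (u := fun x => R - x) (v := g) (u' := fun _ => (-1:ℝ)) (v' := deriv g)
      (a := 0) (b := R)
      (by fun_prop) hgc.continuousOn
      (fun x _ => (hasDerivAt_id x).const_sub R)
      (fun x _ => hgd x)
      intervalIntegrable_const ((hg'c.intervalIntegrable _ _))
    rw [this]
    have : ∫ x in (0:ℝ)..R, (-1:ℝ) * g x = -∫ x in (0:ℝ)..R, g x := by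
      simp [intervalIntegral.integral_neg, neg_one_mul]
    rw [this]; ring
  -- IBP on [-R,0]
  have hibp1 : ∫ x in (-R)..(0:ℝ), (R + x) * deriv g x = R * g 0 - ∫ x in (-R)..(0:ℝ), g x := by
    have := intervalIntegral.integral_mul_deriv_eq_deriv_mul_of_hasDerivAt
      (u := fun x => R + x) (v := g) (u' := fun _ => (1:ℝ)) (v' := deriv g)
      (a := -R) (b := 0)
      (by fun_prop) hgc.continuousOn
      (fun x _ => (hasDerivAt_id x).const_add R)
      (fun x _ => hgd x)
      intervalIntegrable_const ((hg'c.intervalIntegrable _ _))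
    rw [this]
    simp
  -- split both integrals at 0
  have hwint : Continuous (fun x => (R - |x|) * deriv g x) := by fun_prop
  have hsplitw : ∫ x in (-R)..R, (R - |x|) * deriv g x
      = (∫ x in (-R)..(0:ℝ), (R - |x|) * deriv g x) + ∫ x in (0:ℝ)..R, (R - |x|) * deriv g x :=
    (intervalIntegral.integral_add_adjacent_intervals
      (hwint.intervalIntegrable _ _) (hwint.intervalIntegrable _ _)).symm
  have hw1 : ∫ x in (-R)..(0:ℝ), (R - |x|) * deriv g x = ∫ x in (-R)..(0:ℝ), (R + x) * deriv g x := by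
    refine intervalIntegral.integral_congr (fun x hx => ?_)
    rw [Set.uIcc_of_le (by linarith)] at hx
    rw [abs_of_nonpos hx.2]; ring
  have hw2 : ∫ x in (0:ℝ)..R, (R - |x|) * deriv g x = ∫ x in (0:ℝ)..R, (R - x) * deriv g x := by
    refine intervalIntegral.integral_congr (fun x hx => ?_)
    rw [Set.uIcc_of_le hR.le] at hx
    rw [abs_of_nonneg hx.1]
  have hsplits : ∫ x in (-R)..R, Real.sign x * g x
      = (∫ x in (-R)..(0:ℝ), Real.sign x * g x) + ∫ x in (0:ℝ)..R, Real.sign x * g x :=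
    (intervalIntegral.integral_add_adjacent_intervals hsg1 hsg2).symm
  rw [hsplits, hsplitw, hw1, hw2, hibp1, hibp2, hpos, hneg]
  ring

private lemma main_ineq (R : ℝ) (hR : 0 < R) (g : ℝ → ℝ) (hg : ContDiff ℝ (⊤ : ℕ∞) g) :
    (1 / (2 * R)) * ∫ x in Set.Icc (-R) R, Real.sign x * g x
      ≤ R / Real.sqrt 3 *
        Real.sqrt ((1 / (2 * R)) * ∫ x in Set.Icc (-R) R, (deriv g x) ^ 2) := by
  have hRne : R ≠ 0 := hR.ne'
  have hRle : -R ≤ R := by linarith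
  have hIcc : ∀ f : ℝ → ℝ, ∫ x in Set.Icc (-R) R, f x = ∫ x in (-R)..R, f x := fun f => by
    rw [MeasureTheory.integral_Icc_eq_integral_Ioc, intervalIntegral.integral_of_le hRle]
  have hg'c : Continuous (deriv g) := hg.continuous_deriv (by simp)
  set B := ∫ x in Set.Icc (-R) R, (deriv g x) ^ 2 with hBdef
  have hB : 0 ≤ B := setIntegral_nonneg measurableSet_Icc (fun x _ => sq_nonneg _)
  have hwnn : ∀ x ∈ Set.Icc (-R) R, 0 ≤ R - |x| := fun x hx =>
    sub_nonneg.2 (abs_le.2 ⟨hx.1, hx.2⟩)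
  have h1 : ∫ x in Set.Icc (-R) R, Real.sign x * g x
      = ∫ x in Set.Icc (-R) R, (R - |x|) * deriv g x := by
    rw [hIcc, hIcc]; exact ibp_core R hR g hg
  have h2 : ∫ x in Set.Icc (-R) R, (R - |x|) * deriv g x
      ≤ ∫ x in Set.Icc (-R) R, (R - |x|) * |deriv g x| := by
    refine setIntegral_mono_on (Continuous.integrableOn_Icc (by fun_prop))
      (Continuous.integrableOn_Icc (by fun_prop)) measurableSet_Icc (fun x hx => ?_)
    exact mul_le_mul_of_nonneg_left (le_abs_self _) (hwnn x hx)
  have h3 : ∫ x in Set.Icc (-R) R, (R - |x|) * |deriv g x|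
      ≤ Real.sqrt (2 * R ^ 3 / 3) * Real.sqrt B := by
    have hold := MeasureTheory.integral_mul_le_Lp_mul_Lq_of_nonneg
      (μ := volume.restrict (Set.Icc (-R) R)) (p := 2) (q := 2)
      (f := fun x => R - |x|) (g := fun x => |deriv g x|)
      ⟨by norm_num, by norm_num, by norm_num⟩
      ((ae_restrict_iff' measurableSet_Icc).2 (ae_of_all _ hwnn))
      (ae_of_all _ fun x => abs_nonneg _)
      (memLp2_of_continuous (continuous_const.sub continuous_abs) _ _)
      (memLp2_of_continuous hg'c.abs _ _)
    have h2cast : ∀ x : ℝ, x ^ (2:ℝ) = x ^ 2 := fun x => by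
      rw [show (2:ℝ) = ((2:ℕ):ℝ) by norm_num, Real.rpow_natCast]
    simp only [h2cast, ← Real.sqrt_eq_rpow, sq_abs] at hold
    refine hold.trans_eq ?_
    rw [show (∫ x in Set.Icc (-R) R, (R - |x|) ^ 2) = 2 * R ^ 3 / 3 from
      (hIcc (fun x => (R - |x|) ^ 2)).trans (wsq_integral R hR)]
  have key : ∫ x in Set.Icc (-R) R, Real.sign x * g x
      ≤ Real.sqrt (2 * R ^ 3 / 3) * Real.sqrt B := h1 ▸ h2.trans h3
  have c1 : (1 / (2 * R)) * Real.sqrt (2 * R ^ 3 / 3) = Real.sqrt (R / 6) := by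
    rw [show (1/(2*R)) = Real.sqrt ((1/(2*R))^2) from (Real.sqrt_sq (by positivity)).symm,
      ← Real.sqrt_mul (by positivity)]
    congr 1; field_simp; ring
  have c2 : R / Real.sqrt 3 * Real.sqrt (1 / (2 * R)) = Real.sqrt (R / 6) := by
    rw [show R / Real.sqrt 3 = Real.sqrt (R ^ 2 / 3) by
        rw [Real.sqrt_div (by positivity), Real.sqrt_sq hR.le],
      ← Real.sqrt_mul (by positivity)]
    congr 1; field_simp; ring
  calc (1 / (2 * R)) * ∫ x in Set.Icc (-R) R, Real.sign x * g x
      ≤ (1 / (2 * R)) * (Real.sqrt (2 * R ^ 3 / 3) * Real.sqrt B) :=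
        mul_le_mul_of_nonneg_left key (by positivity)
    _ = Real.sqrt (R / 6) * Real.sqrt B := by rw [← mul_assoc, c1]
    _ = R / Real.sqrt 3 * Real.sqrt ((1 / (2 * R)) * B) := by
        rw [Real.sqrt_mul (by positivity), ← mul_assoc, c2]

/-- Lemma 5.1: for the uniform probability measure `μ` on `[-R, R]`,
`∫ sgn · g dμ ≤ (R/√3) √(∫ |g'|² dμ)` for all smooth `g`, hence
`‖sgn‖_{H⁻¹(μ)} ≤ R/√3 = √(∫ x² dμ)`. -/
theorem sign_Hinv_le_uniform (R : ℝ) (hR : 0 < R) :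
    (∀ g : ℝ → ℝ, ContDiff ℝ (⊤ : ℕ∞) g →
      (1 / (2 * R)) * ∫ x in Set.Icc (-R) R, Real.sign x * g x
        ≤ R / Real.sqrt 3 *
          Real.sqrt ((1 / (2 * R)) * ∫ x in Set.Icc (-R) R, (deriv g x) ^ 2)) ∧
    HinvNorm1 ((ENNReal.ofReal (2 * R))⁻¹ • volume.restrict (Set.Icc (-R) R)) Real.sign
      ≤ R / Real.sqrt 3 ∧
    R / Real.sqrt 3
      = Real.sqrt (∫ x, x ^ 2
          ∂((ENNReal.ofReal (2 * R))⁻¹ • volume.restrict (Set.Icc (-R) R))) := by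
  have hRne : R ≠ 0 := hR.ne'
  have hsmul : ∀ f : ℝ → ℝ,
      (∫ x, f x ∂((ENNReal.ofReal (2 * R))⁻¹ • volume.restrict (Set.Icc (-R) R)))
        = (1 / (2 * R)) * ∫ x in Set.Icc (-R) R, f x := by
    intro f
    rw [MeasureTheory.integral_smul_measure, smul_eq_mul, ENNReal.toReal_inv,
      ENNReal.toReal_ofReal (by positivity), one_div]
  refine ⟨fun g hg => main_ineq R hR g hg, ?_, ?_⟩
  · rw [HinvNorm1]
    refine Real.sSup_le ?_ (by positivity)
    rintro r ⟨g, hg, hg1, rfl⟩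
    rw [hsmul] at hg1 ⊢
    calc (1 / (2 * R)) * ∫ x in Set.Icc (-R) R, Real.sign x * g x
        ≤ R / Real.sqrt 3 *
            Real.sqrt ((1 / (2 * R)) * ∫ x in Set.Icc (-R) R, (deriv g x) ^ 2) :=
          main_ineq R hR g hg
      _ ≤ R / Real.sqrt 3 * 1 := by
          refine mul_le_mul_of_nonneg_left ?_ (by positivity)
          exact Real.sqrt_le_one.mpr hg1
      _ = R / Real.sqrt 3 := mul_one _
  · rw [hsmul (fun x : ℝ => x ^ 2)]
    have hx2 : ∫ x in Set.Icc (-R) R, x ^ 2 = 2 * R ^ 3 / 3 := by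
      rw [MeasureTheory.integral_Icc_eq_integral_Ioc,
        ← intervalIntegral.integral_of_le (by linarith : -R ≤ R), integral_pow]
      norm_num
      ring
    rw [hx2, show (1 / (2 * R)) * (2 * R ^ 3 / 3) = R ^ 2 / 3 by field_simp,
      Real.sqrt_div (by positivity) 3, Real.sqrt_sq hR.le]
end

section
/- Let ψ(x) = log(1 + e^{x₁} + ⋯ + e^{xₙ}) for x ∈ ℝⁿ. Then det ∇²ψ(x) = exp( −(n+1)ψ(x) + Σⱼ₌₁ⁿ xⱼ ). In particular, x ↦ det ∇²ψ(x) is a positive log-concave function on ℝⁿ. -/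
/-!
With `vᵢ = e^{xᵢ - ψ(x)}` the gradient of `ψ` is `v` and `∂ᵢvⱼ = vⱼ(δᵢⱼ - vᵢ)`, so
`∇²ψ = diag v - v vᵀ`, whose determinant is `(∏ vᵢ)(1 - ∑ vᵢ)` by the matrix determinant lemma.
Since `∏ vᵢ = e^{∑ xᵢ - nψ}` and `1 - ∑ vᵢ = e^{-ψ}`, this is `e^{-(n+1)ψ + ∑ xᵢ}`; its logarithm
is concave because `ψ` is convex, which follows from applying convexity of `exp` termwise to the
normalisation `e^{-ψ} + ∑ vᵢ = 1`.
-/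

open Real Set Matrix

namespace Matrix

variable {m R : Type*} [Fintype m] [DecidableEq m] [CommRing R]

theorem det_one_add_vecMulVec (u v : m → R) : (1 + vecMulVec u v).det = 1 + v ⬝ᵥ u := by
  rw [vecMulVec_eq Unit, det_one_add_replicateCol_mul_replicateRow]

theorem det_diagonal_sub_vecMulVec (v : m → R) :
    (diagonal v - vecMulVec v v).det = (∏ i, v i) * (1 - ∑ i, v i) := by
  have : diagonal v - vecMulVec v v = diagonal v * (1 + vecMulVec (-1) v) := by
    have hv : diagonal v *ᵥ (-1) = -v := funext fun i => by simp [mulVec_diagonal]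
    rw [Matrix.mul_add, Matrix.mul_one, mul_vecMulVec, hv, neg_vecMulVec, sub_eq_add_neg]
  rw [this, det_mul, det_diagonal, det_one_add_vecMulVec]
  simp [dotProduct, sub_eq_add_neg]

end Matrix

theorem iteratedFDeriv_two_apply_of_hasFDerivAt {𝕜 E F : Type*} [NontriviallyNormedField 𝕜]
    [NormedAddCommGroup E] [NormedSpace 𝕜 E] [NormedAddCommGroup F] [NormedSpace 𝕜 F]
    {f : E → F} {f' : E → E →L[𝕜] F} {f'' : E →L[𝕜] E →L[𝕜] F} {x : E}
    (hf : ∀ y, HasFDerivAt f (f' y) y) (hf' : HasFDerivAt f' f'' x) (u w : E) :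
    iteratedFDeriv 𝕜 2 f x ![u, w] = f'' u w := by
  have : fderiv 𝕜 f = f' := funext fun y => (hf y).fderiv
  simp [iteratedFDeriv_two_apply, this, hf'.fderiv]

section LogPartition

variable {ι : Type*} [Fintype ι]

noncomputable def logPartition (x : ι → ℝ) : ℝ := log (1 + ∑ i, exp (x i))

/-- The softmax of `(0, x)` with its first coordinate dropped. -/
noncomputable def softmax (x : ι → ℝ) (i : ι) : ℝ := exp (x i - logPartition x)

theorem exp_logPartition (x : ι → ℝ) : exp (logPartition x) = 1 + ∑ i, exp (x i) :=
  exp_log (by positivity)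

theorem softmax_eq_div (x : ι → ℝ) (i : ι) :
    softmax x i = exp (x i) / (1 + ∑ j, exp (x j)) := by
  rw [softmax, exp_sub, exp_logPartition]

theorem exp_neg_logPartition_add_sum_softmax (x : ι → ℝ) :
    exp (-logPartition x) + ∑ i, softmax x i = 1 := by
  have : 0 < 1 + ∑ i, exp (x i) := by positivity
  simp only [softmax_eq_div, exp_neg, exp_logPartition, ← Finset.sum_div]
  field_simp

theorem prod_softmax (x : ι → ℝ) :
    ∏ i, softmax x i = exp (∑ i, x i - Fintype.card ι * logPartition x) := by
  simp [softmax, ← exp_sum, Finset.sum_sub_distrib]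

theorem hasFDerivAt_logPartition (x : ι → ℝ) :
    HasFDerivAt logPartition
      (∑ i, softmax x i • ContinuousLinearMap.proj i : (ι → ℝ) →L[ℝ] ℝ) x := by
  have hsum : HasFDerivAt (fun y : ι → ℝ => 1 + ∑ i, exp (y i))
      (∑ i, exp (x i) • ContinuousLinearMap.proj i : (ι → ℝ) →L[ℝ] ℝ) x :=
    (HasFDerivAt.fun_sum fun i _ => (hasFDerivAt_apply i x).exp).const_add 1
  refine (hsum.log (by positivity)).congr_fderiv ?_
  simp only [Finset.smul_sum, smul_smul, softmax_eq_div, div_eq_inv_mul]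

theorem hasFDerivAt_softmax (x : ι → ℝ) (j : ι) :
    HasFDerivAt (softmax · j)
      (softmax x j • ((ContinuousLinearMap.proj j : (ι → ℝ) →L[ℝ] ℝ) -
        ∑ i, softmax x i • ContinuousLinearMap.proj i)) x :=
  ((hasFDerivAt_apply j x).sub (hasFDerivAt_logPartition x)).exp

theorem iteratedFDeriv_two_logPartition [DecidableEq ι] (x : ι → ℝ) (i j : ι) :
    iteratedFDeriv ℝ 2 logPartition x ![Pi.single i 1, Pi.single j 1]
      = (diagonal (softmax x) - vecMulVec (softmax x) (softmax x)) i j := by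
  have hgrad := (HasFDerivAt.fun_sum (u := Finset.univ) fun k _ =>
    (hasFDerivAt_softmax x k).smul_const (ContinuousLinearMap.proj k : (ι → ℝ) →L[ℝ] ℝ))
  rw [iteratedFDeriv_two_apply_of_hasFDerivAt hasFDerivAt_logPartition hgrad]
  simp only [_root_.sum_apply, ContinuousLinearMap.smulRight_apply,
    _root_.smul_apply, _root_.sub_apply, ContinuousLinearMap.proj_apply,
    Pi.single_apply, smul_eq_mul, mul_ite, mul_one, mul_zero, Finset.sum_ite_eq',
    Finset.mem_univ, if_true, Matrix.sub_apply, diagonal_apply, vecMulVec_apply]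
  obtain rfl | hij := eq_or_ne i j
  · simp only [if_true]
    ring
  · simp only [hij, hij.symm, if_false]
    ring

theorem convexOn_logPartition : ConvexOn ℝ univ (logPartition : (ι → ℝ) → ℝ) := by
  refine ⟨convex_univ, fun x _ y _ a b ha hb hab => ?_⟩
  have hexp : ∀ u w : ℝ, exp (a * u + b * w) ≤ a * exp u + b * exp w := fun u w => by
    simpa only [smul_eq_mul] using convexOn_exp.2 (mem_univ u) (mem_univ w) ha hb hab
  have key : exp (logPartition (a • x + b • y) - (a * logPartition x + b * logPartition y)) ≤ 1 :=
    calc exp (logPartition (a • x + b • y) - (a * logPartition x + b * logPartition y))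
        = exp (a * -logPartition x + b * -logPartition y)
          + ∑ i, exp (a * (x i - logPartition x) + b * (y i - logPartition y)) := by
          rw [exp_sub, exp_logPartition, add_div, Finset.sum_div]
          congr 1
          · rw [one_div, ← exp_neg]; ring_nf
          · refine Finset.sum_congr rfl fun i _ => ?_
            rw [← exp_sub]; simp only [Pi.add_apply, Pi.smul_apply, smul_eq_mul]; ring_nf
      _ ≤ (a * exp (-logPartition x) + b * exp (-logPartition y))
          + ∑ i, (a * softmax x i + b * softmax y i) :=
          add_le_add (hexp _ _) (Finset.sum_le_sum fun i _ => hexp _ _)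
      _ = a * (exp (-logPartition x) + ∑ i, softmax x i)
          + b * (exp (-logPartition y) + ∑ i, softmax y i) := by
          rw [Finset.sum_add_distrib, ← Finset.mul_sum, ← Finset.mul_sum]; ring
      _ = 1 := by
          rw [exp_neg_logPartition_add_sum_softmax, exp_neg_logPartition_add_sum_softmax]; linarith
  simpa only [smul_eq_mul, exp_le_one_iff, sub_nonpos] using key

end LogPartition

theorem det_hessian_log_sum_exp_general
    (n : ℕ)
    (ψ : (Fin n → ℝ) → ℝ)
    (hψ : ψ = fun x => Real.log (1 + ∑ i, Real.exp (x i)))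
    (H : (Fin n → ℝ) → Matrix (Fin n) (Fin n) ℝ)
    (hH : H = fun x => Matrix.of fun i j =>
      iteratedFDeriv ℝ 2 ψ x ![Pi.single i 1, Pi.single j 1]) :
    (∀ x, (H x).det = Real.exp (-(n + 1 : ℝ) * ψ x + ∑ j, x j)) ∧
    (∀ x, 0 < (H x).det) ∧
    ConcaveOn ℝ Set.univ (fun x => Real.log ((H x).det)) := by
  obtain rfl : ψ = logPartition := hψ
  have hdet (x : Fin n → ℝ) : (H x).det = exp (-(n + 1 : ℝ) * logPartition x + ∑ j, x j) := by
    have hHx : H x = diagonal (softmax x) - vecMulVec (softmax x) (softmax x) := by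
      ext i j; rw [hH]; exact iteratedFDeriv_two_logPartition x i j
    rw [hHx, det_diagonal_sub_vecMulVec, prod_softmax,
      ← eq_sub_of_add_eq (exp_neg_logPartition_add_sum_softmax x), ← exp_add, Fintype.card_fin]
    ring_nf
  refine ⟨hdet, fun x => hdet x ▸ exp_pos _, ?_⟩
  have hlog : (fun x => log (H x).det)
      = (fun x => -((n + 1 : ℝ) • logPartition x)) + fun x => ∑ j, x j := by
    ext x; simp only [hdet, log_exp, Pi.add_apply, smul_eq_mul]; ring
  rw [hlog]
  refine (convexOn_logPartition.smul (by positivity)).neg.add ?_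
  exact ((∑ j, LinearMap.proj j : (Fin n → ℝ) →ₗ[ℝ] ℝ).concaveOn convex_univ).congr
    fun x _ => by simp

/-- Lemma 4.1(a): for `ψ(x) = log(1 + ∑ e^{xᵢ})`, the determinant of the Hessian equals
`exp(-(n+1)ψ(x) + ∑ xⱼ)`; in particular it is positive and log-concave. -/
theorem det_hessian_log_sum_exp
    (n : ℕ) (hn : 1 ≤ n)
    (ψ : (Fin n → ℝ) → ℝ)
    (hψ : ψ = fun x => Real.log (1 + ∑ i, Real.exp (x i)))
    (H : (Fin n → ℝ) → Matrix (Fin n) (Fin n) ℝ)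
    (hH : H = fun x => Matrix.of fun i j =>
      iteratedFDeriv ℝ 2 ψ x ![Pi.single i 1, Pi.single j 1]) :
    (∀ x, (H x).det = Real.exp (-(n + 1 : ℝ) * ψ x + ∑ j, x j)) ∧
    (∀ x, 0 < (H x).det) ∧
    ConcaveOn ℝ Set.univ (fun x => Real.log ((H x).det)) :=
  det_hessian_log_sum_exp_general n ψ hψ H hH
end

section
/- Let k ≥ 2, n ≥ 1 be integers, π : (ℝ^k)^n → ℝⁿ defined by π(z) = (|z₁|^k,…,|zₙ|^k), and let φ : ℝ₊ⁿ → ℝ be smooth such that (x₁,…,xₙ) ↦ φ(x₁^k,…,xₙ^k) is convex on ℝ₊ⁿ. Define ψ(z) = φ(π(z)) on the set of z with all zᵢ ≠ 0. Let u : (ℝ^k)^n → ℝ be invariant under the action of G = (O(k))ⁿ given by (g₁,…,gₙ)·(z₁,…,zₙ) = (g₁z₁,…,gₙzₙ). Then at every point z with all zᵢ ≠ 0 at which u is differentiable We have ⟨(∇²ψ(z)) ∇u(z), ∇u(z)⟩ ≥ 0. -/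
open Real Set

lemma aux_deriv_nonneg {f : ℝ → ℝ} {δ : ℝ} (hδ : 0 < δ)
    (hm : MonotoneOn f (Ioo (-δ) δ)) (hd : DifferentiableAt ℝ f 0) :
    0 ≤ deriv f 0 := by
  have h := hd.hasDerivAt
  rw [hasDerivAt_iff_tendsto_slope] at h
  have h' : Filter.Tendsto (slope f 0) (nhdsWithin 0 (Ioi 0)) (nhds (deriv f 0)) :=
    h.mono_left (nhdsWithin_mono _ (fun x hx => ne_of_gt hx))
  refine ge_of_tendsto h' ?_
  filter_upwards [Ioo_mem_nhdsGT_of_mem (show (0:ℝ) ∈ Ico 0 δ from ⟨le_refl _, hδ⟩)] with t ht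
  have h0 : (0:ℝ) ∈ Ioo (-δ) δ := ⟨by linarith, hδ⟩
  have htI : t ∈ Ioo (-δ) δ := ⟨by linarith [ht.1], ht.2⟩
  rw [slope_def_field]
  have := hm h0 htI (le_of_lt ht.1)
  have ht0 : 0 < t := ht.1
  exact div_nonneg (by linarith) (by linarith)

/-- Lemma 2.6: if `φ(x₁^k, …, xₙ^k)` is convex on the positive orthant, then for
`ψ(z) = φ(‖z₁‖^k, …, ‖zₙ‖^k)` and any `(O(k))ⁿ`-invariant function `u`, the Hessian of
`ψ` is nonnegative in the direction of `∇u`. -/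
theorem hessian_nonneg_of_invariant
    (n k : ℕ) (hn : 1 ≤ n) (hk : 2 ≤ k)
    (φ : (Fin n → ℝ) → ℝ)
    (hφ : ContDiffOn ℝ (⊤ : ℕ∞) φ {x : Fin n → ℝ | ∀ i, 0 < x i})
    (hconv : ConvexOn ℝ {x : Fin n → ℝ | ∀ i, 0 < x i}
      (fun x => φ (fun i => x i ^ k)))
    (ψ : PiLp 2 (fun _ : Fin n => EuclideanSpace ℝ (Fin k)) → ℝ)
    (hψ : ψ = fun z => φ (fun i => ‖z i‖ ^ k))
    (u : PiLp 2 (fun _ : Fin n => EuclideanSpace ℝ (Fin k)) → ℝ)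
    (hinv : ∀ (g : Fin n → (EuclideanSpace ℝ (Fin k) ≃ₗᵢ[ℝ] EuclideanSpace ℝ (Fin k)))
      (z : PiLp 2 (fun _ : Fin n => EuclideanSpace ℝ (Fin k))),
      u (WithLp.toLp 2 (fun i => g i (z i))) = u z)
    (z : PiLp 2 (fun _ : Fin n => EuclideanSpace ℝ (Fin k)))
    (hz : ∀ i, z i ≠ 0) (hdiff : DifferentiableAt ℝ u z) :
    0 ≤ iteratedFDeriv ℝ 2 ψ z ![gradient u z, gradient u z] := by
  classical
  haveI : ContinuousSMul ℝ (PiLp 2 fun _ : Fin n => EuclideanSpace ℝ (Fin k)) :=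
    IsBoundedSMul.continuousSMul
  set v : PiLp 2 (fun _ : Fin n => EuclideanSpace ℝ (Fin k)) := gradient u z with hvdef
  -- Step A: the gradient has the form (a₁ z₁, …, aₙ zₙ)
  have hgrad : ∀ m : PiLp 2 (fun _ : Fin n => EuclideanSpace ℝ (Fin k)),
      fderiv ℝ u z m = (inner ℝ v m : ℝ) := by
    intro m
    rw [hvdef, gradient, ← InnerProductSpace.toDual_apply_apply,
      LinearIsometryEquiv.apply_symm_apply]
  have key : ∀ i, ∃ a : ℝ, v i = a • z i := by
    intro i
    have hvi : v i ∈ (ℝ ∙ z i) := by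
      rw [← Submodule.orthogonal_orthogonal (ℝ ∙ z i), Submodule.mem_orthogonal]
      intro w hw
      have hziK : z i ∈ (ℝ ∙ w)ᗮ := by
        rw [Submodule.mem_orthogonal_singleton_iff_inner_right]
        have := (Submodule.mem_orthogonal _ w).1 hw (z i) (Submodule.mem_span_singleton_self _)
        rwa [real_inner_comm] at this
      set R := Submodule.reflection (ℝ ∙ w)ᗮ with hRdef
      have hRz : R (z i) = z i := Submodule.reflection_mem_subspace_eq_self hziK
      have hRw : R w = -w := Submodule.reflection_orthogonalComplement_singleton_eq_neg w
      set g : Fin n → (EuclideanSpace ℝ (Fin k) ≃ₗᵢ[ℝ] EuclideanSpace ℝ (Fin k)) :=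
        fun j => if j = i then R else LinearIsometryEquiv.refl ℝ _ with hg
      set T := LinearIsometryEquiv.piLpCongrRight 2 g with hT
      have hTapp : ∀ x : PiLp 2 (fun _ : Fin n => EuclideanSpace ℝ (Fin k)),
          T x = WithLp.toLp 2 (fun j => g j (x j)) := fun x => rfl
      have hTz : T z = z := by
        rw [hTapp]; apply PiLp.ext; intro j
        by_cases h : j = i
        · subst h; simp [hg, hRz]
        · simp [hg, h]
      have hu : u ∘ T = u := by funext x; exact hinv g x
      set m : PiLp 2 (fun _ : Fin n => EuclideanSpace ℝ (Fin k)) := WithLp.toLp 2 (Pi.single i w) with hm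
      have hTm : T m = -m := by
        rw [hTapp]; apply PiLp.ext; intro j
        by_cases h : j = i
        · subst h; simp [hg, hm, hRw]
        · simp [hg, hm, h, Pi.single_eq_of_ne h]
      have hTd : HasFDerivAt (⇑T) (T.toContinuousLinearEquiv : _ →L[ℝ] _) z := by
        have h := T.toContinuousLinearEquiv.hasFDerivAt (x := z)
        rwa [LinearIsometryEquiv.coe_toContinuousLinearEquiv] at h
      have h1 : HasFDerivAt (u ∘ ⇑T) ((fderiv ℝ u z).comp
          (T.toContinuousLinearEquiv : _ →L[ℝ] _)) z := by
        refine HasFDerivAt.comp z ?_ hTd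
        rw [hTz]; exact hdiff.hasFDerivAt
      rw [hu] at h1
      have h2 := h1.fderiv.symm
      have h3 := congrArg (fun (L : _ →L[ℝ] ℝ) => L m) h2
      simp only [ContinuousLinearMap.coe_comp', Function.comp_apply] at h3
      have h4 : (T.toContinuousLinearEquiv : _ →L[ℝ] _) m = T m := rfl
      rw [h4, hTm, map_neg] at h3
      have h5 : fderiv ℝ u z m = 0 := by linarith
      have h6 : (inner ℝ v m : ℝ) = 0 := by rw [← hgrad m, h5]
      have h7 : (inner ℝ v m : ℝ) = inner ℝ (v i) w := by
        rw [PiLp.inner_apply]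
        rw [Finset.sum_eq_single i]
        · rw [hm]; simp
        · intro j _ hj
          rw [hm]; simp [Pi.single_eq_of_ne hj]
        · intro h; exact absurd (Finset.mem_univ i) h
      rw [h7] at h6
      rwa [real_inner_comm] at h6
    rcases Submodule.mem_span_singleton.1 hvi with ⟨a, ha⟩
    exact ⟨a, ha.symm⟩
  choose a ha using key
  -- Step B: ψ is smooth at z
  have hopen : IsOpen {x : Fin n → ℝ | ∀ i, 0 < x i} := by
    have : {x : Fin n → ℝ | ∀ i, 0 < x i} = ⋂ i, (fun x : Fin n → ℝ => x i) ⁻¹' Ioi 0 := by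
      ext x; simp [mem_iInter]
    rw [this]
    exact isOpen_iInter_of_finite fun i => (continuous_apply i).isOpen_preimage _ isOpen_Ioi
  have hψC : ContDiffAt ℝ (⊤ : ℕ∞) ψ z := by
    have hF : ContDiffAt ℝ (⊤ : ℕ∞)
        (fun z' : PiLp 2 (fun _ : Fin n => EuclideanSpace ℝ (Fin k)) => fun i => ‖z' i‖ ^ k) z := by
      apply contDiffAt_pi.2
      intro i
      have hproj : ContDiffAt ℝ (⊤ : ℕ∞)
          (fun z' : PiLp 2 (fun _ : Fin n => EuclideanSpace ℝ (Fin k)) => z' i) z :=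
        (PiLp.proj 2 (fun _ : Fin n => EuclideanSpace ℝ (Fin k)) i :
          _ →L[ℝ] _).contDiff.contDiffAt
      exact (hproj.norm ℝ (hz i)).pow k
    have hmem : (fun i => ‖z i‖ ^ k) ∈ {x : Fin n → ℝ | ∀ i, 0 < x i} :=
      fun i => pow_pos (norm_pos_iff.2 (hz i)) k
    rw [hψ]
    exact (hφ.contDiffAt (hopen.mem_nhds hmem)).comp z hF
  -- the curve c t = z + t • v
  set c : ℝ → PiLp 2 (fun _ : Fin n => EuclideanSpace ℝ (Fin k)) := fun t => z + t • v with hc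
  have hc0 : c 0 = z := by simp [hc]
  have hccont : Continuous c := by
    apply continuous_const.add
    exact continuous_id.smul continuous_const
  have hcder : ∀ t : ℝ, HasDerivAt c v t := by
    intro t
    have h := ((hasDerivAt_id t).smul_const v).const_add z
    simpa [hc] using h
  -- choose δ
  set S : ℝ := ∑ i, |a i| with hS
  have hSnn : 0 ≤ S := Finset.sum_nonneg fun i _ => abs_nonneg _
  have haS : ∀ i, |a i| ≤ S := fun i =>
    Finset.single_le_sum (fun j _ => abs_nonneg (a j)) (Finset.mem_univ i)
  have hδ1 : (0:ℝ) < (1 + S)⁻¹ := by positivity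
  have hev : ∀ᶠ t in nhds (0:ℝ), ContDiffAt ℝ 2 ψ (c t) := by
    have h1 : ∀ᶠ y in nhds z, ContDiffAt ℝ 2 ψ y :=
      (hψC.of_le (WithTop.coe_le_coe.2 le_top)).eventually (by norm_num)
    have h2 : Filter.Tendsto c (nhds 0) (nhds z) := by
      rw [← hc0]; exact hccont.tendsto 0
    exact h2.eventually h1
  rcases Metric.eventually_nhds_iff.1 hev with ⟨δ₂, hδ₂pos, hδ₂⟩
  set δ : ℝ := min ((1 + S)⁻¹) δ₂ with hδdef
  have hδpos : 0 < δ := lt_min hδ1 hδ₂pos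
  set I : Set ℝ := Ioo (-δ) δ with hI
  have habs : ∀ t ∈ I, |t| < δ := by
    intro t ht
    rw [abs_lt]; exact ⟨ht.1, ht.2⟩
  have hpos : ∀ t ∈ I, ∀ i, 0 < 1 + t * a i := by
    intro t ht i
    have h1 : |t * a i| ≤ |t| * S := by
      rw [abs_mul]
      exact mul_le_mul_of_nonneg_left (haS i) (abs_nonneg t)
    have h2 : |t| * S < 1 := by
      have h3 : |t| < (1 + S)⁻¹ := lt_of_lt_of_le (habs t ht) (min_le_left _ _)
      calc |t| * S ≤ (1 + S)⁻¹ * S := mul_le_mul_of_nonneg_right (le_of_lt h3) hSnn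
        _ < 1 := by
          rw [inv_mul_lt_iff₀ (by positivity)]
          linarith
    have := neg_abs_le (t * a i)
    linarith [abs_nonneg (t * a i), h1, h2, neg_abs_le (t * a i)]
  have hψdiff : ∀ t ∈ I, ContDiffAt ℝ 2 ψ (c t) := by
    intro t ht
    apply hδ₂
    rw [Real.dist_eq, sub_zero]
    exact lt_of_lt_of_le (habs t ht) (min_le_right _ _)
  -- component formula for c t
  have hcomp : ∀ t : ℝ, ∀ i, c t i = (1 + t * a i) • z i := by
    intro t i
    show z i + (t • v) i = _
    rw [PiLp.smul_apply, ha i, smul_smul, add_smul, one_smul]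
  have hnormc : ∀ t ∈ I, ∀ i, ‖c t i‖ = (1 + t * a i) * ‖z i‖ := by
    intro t ht i
    rw [hcomp t i, norm_smul, Real.norm_eq_abs, abs_of_pos (hpos t ht i)]
  set ℓ : ℝ → (Fin n → ℝ) := fun t => fun i => (1 + t * a i) * ‖z i‖ with hℓ
  have hmemS : ∀ t ∈ I, ℓ t ∈ {x : Fin n → ℝ | ∀ i, 0 < x i} := by
    intro t ht i
    exact mul_pos (hpos t ht i) (norm_pos_iff.2 (hz i))
  set g : ℝ → ℝ := fun t => ψ (c t) with hgdef
  have hgt : ∀ t ∈ I, g t = φ (fun i => (ℓ t i) ^ k) := by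
    intro t ht
    show ψ (c t) = _
    rw [hψ]
    show φ (fun i => ‖c t i‖ ^ k) = _
    congr 1
    funext i
    rw [hnormc t ht i]
  -- convexity of g on I
  have hgconv : ConvexOn ℝ I g := by
    refine ⟨convex_Ioo _ _, ?_⟩
    intro t₁ ht₁ t₂ ht₂ p q hp hq hpq
    have hmem := (convex_Ioo (-δ) δ) ht₁ ht₂ hp hq hpq
    have h := hconv.2 (hmemS t₁ ht₁) (hmemS t₂ ht₂) hp hq hpq
    rw [hgt _ ht₁, hgt _ ht₂, hgt _ hmem]
    simp only [smul_eq_mul, Pi.add_apply, Pi.smul_apply] at h ⊢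
    have harg : (fun i => (p * ℓ t₁ i + q * ℓ t₂ i) ^ k)
        = fun i => (ℓ (p * t₁ + q * t₂) i) ^ k := by
      funext i
      congr 1
      show p * ((1 + t₁ * a i) * ‖z i‖) + q * ((1 + t₂ * a i) * ‖z i‖)
        = (1 + (p * t₁ + q * t₂) * a i) * ‖z i‖
      have hq' : q = 1 - p := by linarith
      subst hq'
      ring
    rw [harg] at h
    exact h
  -- differentiability of g and derivative formula
  have hgder : ∀ t ∈ I, HasDerivAt g (fderiv ℝ ψ (c t) v) t := by
    intro t ht
    exact (((hψdiff t ht).differentiableAt (by norm_num)).hasFDerivAt).comp_hasDerivAt t (hcder t)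
  have hmono : MonotoneOn (deriv g) I :=
    hgconv.monotoneOn_deriv fun t ht => (hgder t ht).differentiableAt
  -- second derivative of g at 0
  have hd2 : DifferentiableAt ℝ (fderiv ℝ ψ) z := by
    have h := hψC.fderiv_right (m := 1) (WithTop.coe_le_coe.2 le_top)
    exact h.differentiableAt one_ne_zero
  have hH : HasDerivAt (fun t => fderiv ℝ ψ (c t)) (fderiv ℝ (fderiv ℝ ψ) z v) 0 := by
    have hbase : HasFDerivAt (fderiv ℝ ψ) (fderiv ℝ (fderiv ℝ ψ) z) (c 0) := by
      rw [hc0]; exact hd2.hasFDerivAt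
    exact hbase.comp_hasDerivAt 0 (hcder 0)
  have hD : HasDerivAt (fun t => fderiv ℝ ψ (c t) v)
      (fderiv ℝ (fderiv ℝ ψ) z v v) 0 := by
    have h := hH.clm_apply (hasDerivAt_const 0 v)
    simpa using h
  have hDeq : deriv g =ᶠ[nhds 0] fun t => fderiv ℝ ψ (c t) v := by
    filter_upwards [Ioo_mem_nhds (by linarith : -δ < 0) hδpos] with t ht
    exact (hgder t ht).deriv
  have hg'' : HasDerivAt (deriv g) (fderiv ℝ (fderiv ℝ ψ) z v v) 0 :=
    hD.congr_of_eventuallyEq hDeq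
  have hfinal : 0 ≤ fderiv ℝ (fderiv ℝ ψ) z v v := by
    have h := aux_deriv_nonneg hδpos hmono hg''.differentiableAt
    rwa [hg''.deriv] at h
  rw [iteratedFDeriv_two_apply]
  simpa using hfinal
end
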